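/- If K is a finite simplicial complex on vertex set V whose Alexander dual relative to V is the full simplex on some subset (i.e., K^* = Δ^d for some d), then K = ∂τ ∗ Δ^d where τ = Δ(V − V_{Δ^d}); consequently K is an elementary starring (τ,v)Δ^{d+dim(τ)} of a simplex, i.e., a vertex-minimal combinatorial ball that is not a simplex. -/

import Mathlib

/-- A (finite) simplicial complex is represented as a finite set of faces
(finite sets of natural-number vertices). -/
abbrev Cx : Type := Finset (Finset ℕ)

/-- `K` is a simplicial complex: closed under taking subsets of faces. -/
def IsComplex (K : Cx) : Prop := ∀ σ ∈ K, ∀ τ ⊆ σ, τ ∈ K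

/-- Vertex set of a complex. -/
def verts (K : Cx) : Finset ℕ := K.sup id

/-- The full simplex on a vertex set `V` (all subsets). -/
def simplexOn (V : Finset ℕ) : Cx := V.powerset

/-- The boundary of the simplex on `V` (all proper subsets). -/
def boundaryOn (V : Finset ℕ) : Cx := V.powerset.erase V

/-- Alexander dual of `K` relative to a ground vertex set `V`. -/
def dual (K : Cx) (V : Finset ℕ) : Cx := V.powerset.filter (fun σ => V \ σ ∉ K)

/-- Alexander dual of `K` relative to its own vertex set. -/
def dualSelf (K : Cx) : Cx := dual K (verts K)

/-- Iterated Alexander dual, each dual taken relative to the current vertex set. -/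
def iterDual : ℕ → Cx → Cx
  | 0, K => K
  | m + 1, K => dualSelf (iterDual m K)

/-- Join of two complexes (on disjoint vertex sets). -/
def join (K L : Cx) : Cx := (K ×ˢ L).image fun p => p.1 ∪ p.2

/-- Link of a face `σ` in `K`. -/
def link (σ : Finset ℕ) (K : Cx) : Cx :=
  K.filter fun τ => τ ∩ σ = ∅ ∧ τ ∪ σ ∈ K

/-- Star of a face `σ` in `K`. -/
def star (σ : Finset ℕ) (K : Cx) : Cx := K.filter fun τ => τ ∪ σ ∈ K

/-- Deletion of a vertex. -/
def del (v : ℕ) (K : Cx) : Cx := K.filter fun σ => v ∉ σ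

/-- The facets (maximal = principal faces) of `K`. -/
def facets (K : Cx) : Cx := K.filter fun σ => ∀ τ ∈ K, σ ⊆ τ → σ = τ

/-- Number of principal simplices. -/
def mCount (K : Cx) : ℕ := (facets K).card

/-- `K.sup card`, i.e. `dim K + 1`. -/
def topCard (K : Cx) : ℕ := K.sup Finset.card

/-- Dimension of a complex, as an integer (so that `dim {∅} = -1`). -/
def dimC (K : Cx) : ℤ := (topCard K : ℤ) - 1

/-- `L` is a top generated subcomplex of `K`. -/
def topGen (L K : Cx) : Prop := L ⊆ K ∧ facets L ⊆ facets K

/-- The boundary complex: generated by the ridges ((d-1)-faces) contained in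
exactly one facet of top dimension. -/
def bd (K : Cx) : Cx :=
  (K.filter fun σ => σ.card + 1 = topCard K ∧
    (K.filter fun τ => τ.card = topCard K ∧ σ ⊆ τ).card = 1).biUnion Finset.powerset

/-- Simplicial isomorphism of complexes. -/
def Iso (K L : Cx) : Prop :=
  ∃ f : ℕ → ℕ, Set.InjOn f ↑(verts K) ∧ K.image (Finset.image f) = L

/-- Elementary starring `(τ, a) K`: remove the faces containing `τ` and replace
`st(τ,K) = τ * lk(τ,K)` by `a * ∂τ * lk(τ,K)`. -/
def starringOp (τ : Finset ℕ) (a : ℕ) (K : Cx) : Cx :=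
  K.filter (fun σ => ¬ τ ⊆ σ) ∪
    join (simplexOn {a}) (join (boundaryOn τ) (link τ K))

/-- One stellar subdivision step. -/
inductive SubdivStep : Cx → Cx → Prop where
  | mk (K : Cx) (τ : Finset ℕ) (a : ℕ) : τ ∈ K → τ ≠ ∅ → a ∉ verts K →
      SubdivStep K (starringOp τ a K)

/-- `Subdiv K K'` : `K'` is obtained from `K` by stellar subdivisions. -/
def Subdiv : Cx → Cx → Prop := Relation.ReflTransGen SubdivStep

/-- Stellar equivalence (by Alexander's theorem, this is PL-isomorphism):
the equivalence relation generated by stellar subdivisions and simplicial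
isomorphisms. -/
def StellarEquiv : Cx → Cx → Prop :=
  Relation.EqvGen (fun K L => SubdivStep K L ∨ Iso K L)

/-- A combinatorial `d`-ball: a complex PL-isomorphic to the `d`-simplex. -/
def CombBall (d : ℕ) (B : Cx) : Prop :=
  StellarEquiv B (simplexOn (Finset.range (d + 1)))

/-- A combinatorial `d`-sphere: a complex PL-isomorphic to `∂Δ^{d+1}`. -/
def CombSphere (d : ℕ) (S : Cx) : Prop :=
  StellarEquiv S (boundaryOn (Finset.range (d + 2)))

/-- An elementary collapse step through a free face. -/
def CollapseStep (K L : Cx) : Prop :=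
  ∃ σ τ : Finset ℕ, σ ∈ K ∧ τ ∈ K ∧ σ ⊆ τ ∧ σ.card + 1 = τ.card ∧
    (∀ ρ ∈ K, σ ⊆ ρ → ρ = σ ∨ ρ = τ) ∧ L = K \ {σ, τ}

/-- Simplicial collapse. -/
def CollapsesTo : Cx → Cx → Prop := Relation.ReflTransGen CollapseStep

/-- A complex is collapsible if it has a (stellar) subdivision which collapses
to a single vertex. -/
def Collapsible (K : Cx) : Prop :=
  ∃ K', Subdiv K K' ∧ ∃ v : ℕ, CollapsesTo K' ({∅, {v}} : Cx)

mutual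
/-- Non-homogeneous manifold of dimension `d` (inductive definition via links:
every vertex link is an NH-ball or an NH-sphere of smaller dimension; the
`(-1)`-dimensional NH-sphere is the complex `{∅}`). -/
def NHManifold : ℕ → Cx → Prop
  | 0 => fun K => IsComplex K ∧ K.Nonempty ∧ topCard K = 1
  | (d + 1) => fun K => IsComplex K ∧ topCard K = d + 2 ∧
      ∀ v ∈ verts K,
        link {v} K = ({∅} : Cx) ∨
        (∃ k, ∃ _ : k ≤ d, NHBall k (link {v} K)) ∨
        (∃ k, ∃ _ : k ≤ d, ∃ j, ∃ _ : j ≤ k, NHSphereH k j (link {v} K))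
  termination_by d => 3 * d
  decreasing_by all_goals omega

/-- Non-homogeneous ball of dimension `d`: a collapsible NH-manifold. -/
def NHBall : ℕ → Cx → Prop
  | 0 => fun K => ∃ v : ℕ, K = ({∅, {v}} : Cx)
  | (d + 1) => fun K => NHManifold (d + 1) K ∧ Collapsible K
  termination_by d => 3 * d + 1
  decreasing_by all_goals omega

/-- Non-homogeneous sphere of dimension `d` and homotopy dimension `k`:
an NH-manifold `S` admitting a decomposition `S = B + L` with `B` a top
generated NH-ball of dimension `d`, `L` a top generated combinatorial
`k`-ball and `B ∩ L = ∂L`. -/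
def NHSphereH : ℕ → ℕ → Cx → Prop
  | d, k => fun S => NHManifold d S ∧ ∃ B L : Cx,
      NHBall d B ∧ topGen B S ∧ CombBall k L ∧ topGen L S ∧
      B ∪ L = S ∧ B ∩ L = bd L
  termination_by d k => 3 * d + 2
  decreasing_by all_goals omega
end

/-- `S = B + L` is a decomposition of the `d`-dimensional NH-sphere `S` of
homotopy dimension `k`. -/
def SphereDecomp (d k : ℕ) (S B L : Cx) : Prop :=
  NHManifold d S ∧ NHBall d B ∧ topGen B S ∧ CombBall k L ∧ topGen L S ∧
    B ∪ L = S ∧ B ∩ L = bd L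

/-- A minimal NH-sphere of dimension `d`: an NH-sphere whose number of maximal
faces equals its homotopy dimension plus `2`. -/
def MinNHSphereD (d : ℕ) (S : Cx) : Prop :=
  ∃ k : ℕ, NHSphereH d k S ∧ mCount S = k + 2

/-- A minimal NH-sphere (of any dimension, including the `(-1)`-sphere `{∅}`). -/
def MinNHSphere (S : Cx) : Prop :=
  S = ({∅} : Cx) ∨ ∃ d : ℕ, MinNHSphereD d S

/-- A minimal NH-ball of dimension `d`: an NH-ball `B` taking part in a
decomposition `S = B + L` of a minimal NH-sphere. -/
def MinNHBall (d : ℕ) (B : Cx) : Prop :=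
  ∃ (k : ℕ) (S L : Cx), SphereDecomp d k S B L ∧ mCount S = k + 2

/-! The dual hypothesis says that a subset of `V = verts K` is a face of `K` exactly when it
does not contain `τ = V \ D`; so `K` is the simplex on `V` with the face `τ` deleted, which is
`∂τ ∗ Δ^D`. Starring the simplex on `V - a`, for a vertex `a ∈ D`, at `τ` with new vertex `a`
gives back exactly this complex. After relabelling `V` as `{0, …, n}` with `τ` first and `a = n`,
`K` is thus one stellar subdivision of an `(n-1)`-simplex, hence a combinatorial ball, and it is
not a simplex since `τ ∉ K`. -/

open Finset

def deleteFace (τ : Finset ℕ) (K : Cx) : Cx := K.filter fun σ => ¬ τ ⊆ σ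

@[simp]
lemma mem_deleteFace {τ σ : Finset ℕ} {K : Cx} : σ ∈ deleteFace τ K ↔ σ ∈ K ∧ ¬ τ ⊆ σ :=
  mem_filter

lemma subset_verts {K : Cx} {σ : Finset ℕ} (h : σ ∈ K) : σ ⊆ verts K :=
  le_sup (f := id) h

lemma verts_subset {K : Cx} {V : Finset ℕ} (h : ∀ σ ∈ K, σ ⊆ V) : verts K ⊆ V :=
  Finset.sup_le h

lemma verts_simplexOn (W : Finset ℕ) : verts (simplexOn W) = W :=
  (verts_subset fun _ => mem_powerset.mp).antisymm (subset_verts (mem_powerset_self W))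

lemma not_exists_eq_simplexOn {K : Cx} {σ : Finset ℕ} (hσ : σ ⊆ verts K) (hσK : σ ∉ K) :
    ¬ ∃ W, K = simplexOn W := by
  rintro ⟨W, rfl⟩
  rw [verts_simplexOn] at hσ
  exact hσK (mem_powerset.mpr hσ)

lemma boundaryOn_eq_deleteFace (τ : Finset ℕ) : boundaryOn τ = deleteFace τ (simplexOn τ) := by
  ext σ
  simp only [boundaryOn, simplexOn, mem_deleteFace, mem_erase, mem_powerset]
  constructor
  · rintro ⟨hne, hσ⟩
    exact ⟨hσ, fun h => hne (hσ.antisymm h)⟩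
  · rintro ⟨hσ, h⟩
    exact ⟨fun e => h e.ge, hσ⟩

lemma join_comm (K L : Cx) : join K L = join L K := by
  ext σ
  simp only [join, mem_image, mem_product, Prod.exists]
  constructor <;>
  · rintro ⟨α, β, ⟨hα, hβ⟩, rfl⟩
    exact ⟨β, α, ⟨hβ, hα⟩, union_comm _ _⟩

lemma join_simplexOn_deleteFace {A U τ : Finset ℕ} (h : Disjoint A τ) :
    join (simplexOn A) (deleteFace τ (simplexOn U)) = deleteFace τ (simplexOn (A ∪ U)) := by
  ext σ
  simp only [join, simplexOn, mem_deleteFace, mem_image, mem_product, mem_powerset,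
    Prod.exists]
  constructor
  · rintro ⟨α, β, ⟨hα, hβ, hτβ⟩, rfl⟩
    refine ⟨union_subset_union hα hβ, fun hτ => hτβ ?_⟩
    exact Disjoint.left_le_of_le_sup_left hτ (disjoint_of_subset_left hα h).symm
  · rintro ⟨hσ, hτσ⟩
    exact ⟨σ ∩ A, σ \ A, ⟨inter_subset_right, sdiff_le_iff.mpr hσ,
      fun h' => hτσ (h'.trans sdiff_subset)⟩, sup_inf_sdiff σ A⟩

lemma join_boundaryOn_simplexOn {τ W : Finset ℕ} (h : Disjoint τ W) :
    join (boundaryOn τ) (simplexOn W) = deleteFace τ (simplexOn (W ∪ τ)) := by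
  rw [join_comm, boundaryOn_eq_deleteFace, join_simplexOn_deleteFace h.symm]

lemma link_simplexOn {τ W : Finset ℕ} (hτW : τ ⊆ W) :
    link τ (simplexOn W) = simplexOn (W \ τ) := by
  ext ρ
  simp only [link, simplexOn, mem_filter, mem_powerset, subset_sdiff,
    disjoint_iff_inter_eq_empty]
  exact ⟨fun ⟨hρ, hint, _⟩ => ⟨hρ, hint⟩, fun ⟨hρ, hint⟩ => ⟨hρ, hint, union_subset hρ hτW⟩⟩

lemma starringOp_simplexOn {τ W : Finset ℕ} {a : ℕ} (hτW : τ ⊆ W) (ha : a ∉ τ) :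
    starringOp τ a (simplexOn W) = deleteFace τ (simplexOn (insert a W)) := by
  change deleteFace τ (simplexOn W) ∪ _ = _
  rw [link_simplexOn hτW, join_boundaryOn_simplexOn disjoint_sdiff,
    sdiff_union_of_subset hτW, join_simplexOn_deleteFace (disjoint_singleton_left.mpr ha),
    ← insert_eq]
  exact union_eq_right.mpr (filter_subset_filter _ (powerset_mono.mpr (subset_insert a W)))

lemma starringOp_range_simplexOn {t n : ℕ} (h : t ≤ n) :
    starringOp (range t) n (simplexOn (range n))
      = deleteFace (range t) (simplexOn (range (n + 1))) := by
  rw [starringOp_simplexOn (range_subset_range.mpr h) (by simpa using h), range_add_one]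

lemma subdivStep_range_simplexOn {t n : ℕ} (ht : 0 < t) (h : t ≤ n) :
    SubdivStep (simplexOn (range n)) (starringOp (range t) n (simplexOn (range n))) :=
  SubdivStep.mk _ _ _ (mem_powerset.mpr (range_subset_range.mpr h))
    (nonempty_range_iff.mpr ht.ne').ne_empty (by rw [verts_simplexOn]; exact notMem_range_self)

lemma combBall_of_iso_of_subdivStep {K L : Cx} {n : ℕ} (hn : 0 < n) (hiso : Iso K L)
    (hstep : SubdivStep (simplexOn (range n)) L) : CombBall (n - 1) K := by
  rw [CombBall, Nat.sub_add_cancel hn]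
  exact .trans _ _ _ (.rel _ _ (Or.inr hiso)) (.symm _ _ (.rel _ _ (Or.inl hstep)))

lemma image_deleteFace_simplexOn {τ V : Finset ℕ} {f : ℕ → ℕ} (hinj : Set.InjOn f V)
    (hτ : τ ⊆ V) :
    (deleteFace τ (simplexOn V)).image (image f)
      = deleteFace (τ.image f) (simplexOn (V.image f)) := by
  ext ρ
  simp only [simplexOn, mem_deleteFace, mem_image, mem_powerset]
  constructor
  · rintro ⟨σ, ⟨hσ, hτσ⟩, rfl⟩
    refine ⟨image_subset_image hσ, fun h => hτσ fun x hx => ?_⟩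
    obtain ⟨y, hy, hyx⟩ := mem_image.mp (h (mem_image_of_mem f hx))
    rwa [hinj (hσ hy) (hτ hx) hyx] at hy
  · rintro ⟨hρ, hτρ⟩
    obtain ⟨σ, hσ, rfl⟩ := subset_image_iff.mp hρ
    exact ⟨σ, ⟨hσ, fun h => hτρ (image_subset_image h)⟩, rfl⟩

lemma List.Nodup.image_idxOf_toFinset {l : List ℕ} (hl : l.Nodup) :
    l.toFinset.image l.idxOf = Finset.range l.length := by
  ext i
  simp only [mem_image, List.mem_toFinset, Finset.mem_range]
  constructor
  · rintro ⟨x, hx, rfl⟩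
    exact List.idxOf_lt_length_iff.mpr hx
  · intro hi
    exact ⟨l[i], List.getElem_mem hi, hl.idxOf_getElem i hi⟩

lemma exists_injOn_image_eq_range {τ V : Finset ℕ} (h : τ ⊆ V) :
    ∃ f : ℕ → ℕ, Set.InjOn f V ∧ V.image f = range V.card ∧ τ.image f = range τ.card := by
  set l := τ.toList ++ (V \ τ).toList
  have hl : l.Nodup := τ.nodup_toList.append (V \ τ).nodup_toList
    fun _ ha hb => (mem_sdiff.mp (mem_toList.mp hb)).2 (mem_toList.mp ha)
  have hV : l.toFinset = V := by
    ext x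
    simp only [l, List.mem_toFinset, List.mem_append, mem_toList, mem_sdiff]
    exact ⟨fun hx => hx.elim (fun hx => h hx) And.left,
      fun hx => or_iff_not_imp_left.mpr (⟨hx, ·⟩)⟩
  have hlen : l.length = V.card := by rw [← hV, List.toFinset_card_of_nodup hl]
  refine ⟨l.idxOf, fun x hx y _ hxy => ?_, ?_, ?_⟩
  · exact (List.idxOf_inj (List.mem_toFinset.mp (hV ▸ hx))).mp hxy
  · rw [← hlen, ← hl.image_idxOf_toFinset, hV]
  · calc τ.image l.idxOf = τ.toList.toFinset.image τ.toList.idxOf := by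
          rw [toList_toFinset]
          exact image_congr fun x hx => List.idxOf_append_of_mem (mem_toList.mpr hx)
      _ = range τ.card := by rw [τ.nodup_toList.image_idxOf_toFinset, length_toList]

lemma iso_deleteFace_simplexOn {τ V : Finset ℕ} (h : τ ⊆ V) :
    Iso (deleteFace τ (simplexOn V)) (deleteFace (range τ.card) (simplexOn (range V.card))) := by
  obtain ⟨f, hinj, hV, hτ⟩ := exists_injOn_image_eq_range h
  refine ⟨f, hinj.mono (verts_subset fun σ hσ => ?_), ?_⟩
  · exact mem_powerset.mp (mem_deleteFace.mp hσ).1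
  · rw [image_deleteFace_simplexOn hinj h, hV, hτ]

lemma subset_of_dual_eq_simplexOn {K : Cx} {V D : Finset ℕ} (hdual : dual K V = simplexOn D) :
    D ⊆ V :=
  mem_powerset.mp (mem_filter.mp (hdual ▸ mem_powerset_self D : D ∈ dual K V)).1

lemma eq_deleteFace_of_dual_eq_simplexOn {K : Cx} {V D : Finset ℕ} (hK : IsComplex K)
    (hKV : ∀ σ ∈ K, σ ⊆ V) (hdual : dual K V = simplexOn D) :
    K = deleteFace (V \ D) (simplexOn V) := by
  have hiff : ∀ σ, (σ ⊆ V ∧ V \ σ ∉ K) ↔ σ ⊆ D := fun σ => by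
    simpa [dual, simplexOn] using Finset.ext_iff.mp hdual σ
  ext ρ
  simp only [mem_deleteFace, simplexOn, mem_powerset]
  constructor
  · intro hρ
    exact ⟨hKV ρ hρ, fun h => ((hiff D).mpr subset_rfl).2 (hK ρ hρ _ h)⟩
  · rintro ⟨hρV, hτρ⟩
    by_contra hρK
    have hcompl : V \ ρ ⊆ D :=
      (hiff _).mp ⟨sdiff_subset, by rwa [Finset.sdiff_sdiff_eq_self hρV]⟩
    exact hτρ (sdiff_le_comm.mp hcompl)

/-- if `K^* = Δ^d` then `K = ∂τ * Δ^d` where `τ = Δ(V_K - V_{Δ^d})`;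
consequently `K` is (isomorphic to) an elementary starring `(τ,v)Δ^{d + dim τ}` of
a simplex, i.e. a vertex-minimal combinatorial ball which is not a simplex. -/
theorem stmt10 (K : Cx) (D : Finset ℕ) (d : ℕ) (hK : IsComplex K)
    (hne : K.Nonempty) (hD : D.card = d + 1) (hdual : dualSelf K = simplexOn D) :
    K = join (boundaryOn (verts K \ D)) (simplexOn D) ∧
      (∃ (τ' : Finset ℕ) (a : ℕ),
        τ' ⊆ Finset.range (d + (verts K \ D).card) ∧ τ' ≠ ∅ ∧
        a ∉ Finset.range (d + (verts K \ D).card) ∧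
        Iso K (starringOp τ' a (simplexOn (Finset.range (d + (verts K \ D).card))))) ∧
      CombBall (d + (verts K \ D).card - 1) K ∧
      (verts K).card ≤ (d + (verts K \ D).card - 1) + 2 ∧
      ¬ ∃ W : Finset ℕ, K = simplexOn W := by
  have hKV : ∀ σ ∈ K, σ ⊆ verts K := fun _ => subset_verts
  replace hdual : dual K (verts K) = simplexOn D := hdual
  generalize hV : verts K = V at hKV hdual ⊢
  have hDV : D ⊆ V := subset_of_dual_eq_simplexOn hdual
  obtain rfl := eq_deleteFace_of_dual_eq_simplexOn hK hKV hdual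
  have hcard : V.card = d + (V \ D).card + 1 := by
    rw [← card_sdiff_add_card_eq_card hDV, hD]
    omega
  set τ := V \ D
  have hτK : τ ∉ deleteFace τ (simplexOn V) := fun h => (mem_deleteFace.mp h).2 subset_rfl
  have hτ : 0 < τ.card := by
    obtain ⟨σ, hσ⟩ := hne
    have hτ_not_subset_empty := (mem_deleteFace.mp (hK σ hσ ∅ (empty_subset σ))).2
    exact card_pos.mpr (nonempty_iff_ne_empty.mpr (subset_empty.not.mp hτ_not_subset_empty))
  have hiso : Iso (deleteFace τ (simplexOn V))
      (starringOp (range τ.card) (d + τ.card) (simplexOn (range (d + τ.card)))) := by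
    rw [starringOp_range_simplexOn (by omega), ← hcard]
    exact iso_deleteFace_simplexOn sdiff_subset
  refine ⟨?_, ⟨range τ.card, d + τ.card, range_subset_range.mpr (by omega),
      (nonempty_range_iff.mpr hτ.ne').ne_empty, notMem_range_self, hiso⟩,
    combBall_of_iso_of_subdivStep (by omega) hiso (subdivStep_range_simplexOn hτ (by omega)),
    by omega, not_exists_eq_simplexOn (by rw [hV]; exact sdiff_subset) hτK⟩
  rw [join_boundaryOn_simplexOn sdiff_disjoint, union_sdiff_of_subset hDV]
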